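/- Assuming (a) the factorization theorem for stabilizer states in composite dimension and (b) the nonexistence of AME(4,2) states, there is no stabilizer AME(4, D) state for any D ≡ 2 (mod 4). In particular there is no stabilizer AME(4,6) state. -/
import Mathlib

noncomputable section

open Matrix Complex BigOperators

/-- `ω = e^{2πi/D}`. -/
def omegaD (D : ℕ) : ℂ := Complex.exp (2 * Real.pi * Complex.I / D)

/-- The clock operator `Z = ∑_j ω^j |j⟩⟨j|` on `ℂ^D`. -/
def Zc (D : ℕ) : Matrix (Fin D) (Fin D) ℂ :=
  Matrix.diagonal fun j => omegaD D ^ (j : ℕ)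

/-- The shift operator `X = ∑_j |j⟩⟨j+1|` on `ℂ^D` (indices mod `D`). -/
def Xc (D : ℕ) : Matrix (Fin D) (Fin D) ℂ :=
  Matrix.of fun j k => if (k : ℕ) = ((j : ℕ) + 1) % D then 1 else 0

/-- Combine an assignment on `S` and on its complement into one on `Fin n`. -/
def glue {n : ℕ} {τ : Type*} (S : Finset (Fin n)) (a : {i // i ∈ S} → τ)
    (f : {i // i ∉ S} → τ) : Fin n → τ :=
  fun i => if h : i ∈ S then a ⟨i, h⟩ else f ⟨i, h⟩

/-- The reduced density matrix of a pure state `ψ ∈ (ℂ^τ)^{⊗n}` on the parties in `S`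
(tracing out the complement of `S`). -/
def rdm {n : ℕ} {τ : Type*} [Fintype τ] (S : Finset (Fin n))
    (ψ : (Fin n → τ) → ℂ) :
    Matrix ({i // i ∈ S} → τ) ({i // i ∈ S} → τ) ℂ :=
  Matrix.of fun a b =>
    ∑ f : {i // i ∉ S} → τ, ψ (glue S a f) * (starRingEnd ℂ) (ψ (glue S b f))

/-- `ψ` is an absolutely maximally entangled state: it is a unit vector and every reduction
to `⌊n/2⌋` parties is maximally mixed. -/
def IsAME {n : ℕ} {τ : Type*} [Fintype τ] [DecidableEq τ] (ψ : (Fin n → τ) → ℂ) : Prop :=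
  (∑ g, Complex.normSq (ψ g) = 1) ∧
  ∀ S : Finset (Fin n), S.card = n / 2 →
    rdm S ψ = ((Fintype.card τ : ℂ) ^ S.card)⁻¹ • (1 : Matrix _ _ ℂ)

/-- An `n`-qudit Pauli product `λ^γ X^{x_1}Z^{z_1} ⊗ ⋯ ⊗ X^{x_n}Z^{z_n}` with `λ = e^{πi/D}`. -/
def pauliProd (n D : ℕ) (γ : ℕ) (x z : Fin n → ℕ) :
    Matrix (Fin n → Fin D) (Fin n → Fin D) ℂ :=
  Complex.exp (Real.pi * Complex.I / D) ^ γ •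
    Matrix.of fun a b => ∏ k, (Xc D ^ (x k) * Zc D ^ (z k)) (a k) (b k)

/-- A matrix is a Pauli product. -/
def IsPauliProd {n D : ℕ} (M : Matrix (Fin n → Fin D) (Fin n → Fin D) ℂ) : Prop :=
  ∃ γ x z, M = pauliProd n D γ x z

/-- `ψ` is a stabilizer state: a unit vector fixed by an abelian group of `D^n` linearly
independent Pauli products. -/
def IsStabState {n D : ℕ} (ψ : (Fin n → Fin D) → ℂ) : Prop :=
  (∑ g, Complex.normSq (ψ g) = 1) ∧
  ∃ S : Finset (Matrix (Fin n → Fin D) (Fin n → Fin D) ℂ),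
    (∀ s ∈ S, IsPauliProd s) ∧ (1 : Matrix _ _ ℂ) ∈ S ∧
    (∀ s ∈ S, ∀ t ∈ S, s * t ∈ S ∧ s * t = t * s) ∧
    LinearIndependent ℂ (fun s : S => (s : Matrix (Fin n → Fin D) (Fin n → Fin D) ℂ)) ∧
    S.card = D ^ n ∧ (∀ s ∈ S, s.mulVec ψ = ψ)

/-- The regrouped tensor product of states `ψ i ∈ (ℂ^{q i})^{⊗n}`, viewed as a state on
`(⊗_i ℂ^{q i})^{⊗n}`. -/
def regroup {n m : ℕ} (q : Fin m → ℕ) (ψ : ∀ i, (Fin n → Fin (q i)) → ℂ) :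
    (Fin n → ∀ i, Fin (q i)) → ℂ :=
  fun g => ∏ i, ψ i fun k => g k i

/-- The `n`-fold tensor power `U^{⊗n}` of a matrix `U`. -/
def tpow {α β : Type*} (n : ℕ) (U : Matrix α β ℂ) : Matrix (Fin n → α) (Fin n → β) ℂ :=
  Matrix.of fun g f => ∏ k, U (g k) (f k)


section glueLemmas
variable {n : ℕ} {τ : Type*} [Fintype τ] (S : Finset (Fin n))

lemma glue_eq_equiv (a : {i // i ∈ S} → τ) (f : {i // i ∉ S} → τ) :
    glue S a f = (Equiv.piEquivPiSubtypeProd (· ∈ S) (fun _ => τ)).symm (a, f) := rfl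

lemma sum_glue {M : Type*} [AddCommMonoid M] (F : (Fin n → τ) → M) :
    ∑ f, F f = ∑ a : {i // i ∈ S} → τ, ∑ h : {i // i ∉ S} → τ, F (glue S a h) := by
  have := Fintype.sum_equiv (Equiv.piEquivPiSubtypeProd (· ∈ S) (fun _ => τ)).symm
    (fun x => F ((Equiv.piEquivPiSubtypeProd (· ∈ S) (fun _ => τ)).symm x)) F
    (fun x => rfl)
  rw [← this, Fintype.sum_prod_type]
  rfl

lemma glue_mem (a : {i // i ∈ S} → τ) (f : {i // i ∉ S} → τ) (s : {i // i ∈ S}) :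
    glue S a f s.1 = a s := by
  simp only [glue, dif_pos s.2]

lemma glue_not_mem (a : {i // i ∈ S} → τ) (f : {i // i ∉ S} → τ) (s : {i // i ∉ S}) :
    glue S a f s.1 = f s := by
  simp only [glue, dif_neg s.2]

lemma prod_glue_split (F : Fin n → ℂ) :
    ∏ k, F k = (∏ s : {i // i ∈ S}, F s.1) * ∏ s : {i // i ∉ S}, F s.1 := by
  rw [← Finset.prod_mul_prod_compl S F]
  congr 1
  · exact Finset.prod_subtype S (fun x => Iff.rfl) F
  · exact Finset.prod_subtype Sᶜ (fun x => Finset.mem_compl) F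
end glueLemmas

section tpI
variable {τ τ' τ'' : Type*} [Fintype τ] [DecidableEq τ] [Fintype τ'] [DecidableEq τ'']
  [Fintype τ'']

/-- tensor power over an arbitrary finite index type -/
def tpI (ι : Type*) [Fintype ι] (U : Matrix τ' τ ℂ) : Matrix (ι → τ') (ι → τ) ℂ :=
  Matrix.of fun a b => ∏ s, U (a s) (b s)

lemma tpI_mul (ι : Type*) [Fintype ι] [DecidableEq ι] (U : Matrix τ' τ ℂ) (V : Matrix τ τ'' ℂ) :
    tpI ι U * tpI ι V = tpI ι (U * V) := by
  ext a b
  simp only [tpI, Matrix.mul_apply, Matrix.of_apply, ← Finset.prod_mul_distrib]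
  rw [Finset.prod_univ_sum]
  rw [Fintype.piFinset_univ]

lemma tpI_one (ι : Type*) [Fintype ι] [DecidableEq τ] :
    tpI ι (1 : Matrix τ τ ℂ) = 1 := by
  ext a b
  simp only [tpI, Matrix.of_apply, Matrix.one_apply]
  by_cases h : a = b
  · subst h; simp
  · rw [if_neg h]
    obtain ⟨s, hs⟩ := Function.ne_iff.mp h
    exact Finset.prod_eq_zero (Finset.mem_univ s) (by rw [if_neg hs])

lemma tpI_conjTranspose (ι : Type*) [Fintype ι] (U : Matrix τ' τ ℂ) :
    (tpI ι U)ᴴ = tpI ι Uᴴ := by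
  ext a b
  simp [tpI, Matrix.conjTranspose_apply, map_prod]
end tpI

section amp
variable {n : ℕ} {τ τ' : Type*} [Fintype τ] [DecidableEq τ] [Fintype τ'] [DecidableEq τ']
  (S : Finset (Fin n))

def amp (ψ : (Fin n → τ) → ℂ) : Matrix ({i // i ∈ S} → τ) ({i // i ∉ S} → τ) ℂ :=
  Matrix.of fun a f => ψ (glue S a f)

lemma rdm_eq_amp (ψ : (Fin n → τ) → ℂ) : rdm S ψ = amp S ψ * (amp S ψ)ᴴ := by
  ext a b
  simp [rdm, amp, Matrix.mul_apply, Matrix.conjTranspose_apply]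

lemma tpow_glue (U : Matrix τ' τ ℂ) (a : {i // i ∈ S} → τ') (h : {i // i ∉ S} → τ')
    (a' : {i // i ∈ S} → τ) (h' : {i // i ∉ S} → τ) :
    tpow n U (glue S a h) (glue S a' h') =
      tpI {i // i ∈ S} U a a' * tpI {i // i ∉ S} U h h' := by
  show (∏ k, U (glue S a h k) (glue S a' h' k)) = _
  rw [prod_glue_split S]
  congr 1
  · exact Finset.prod_congr rfl fun s _ => by rw [glue_mem, glue_mem]
  · exact Finset.prod_congr rfl fun s _ => by rw [glue_not_mem, glue_not_mem]

lemma amp_mulVec (U : Matrix τ' τ ℂ) (ψ : (Fin n → τ) → ℂ) :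
    amp S ((tpow n U).mulVec ψ) =
      tpI {i // i ∈ S} U * amp S ψ * (tpI {i // i ∉ S} U)ᵀ := by
  ext a h
  show (tpow n U).mulVec ψ (glue S a h) = _
  rw [Matrix.mulVec, dotProduct]
  rw [sum_glue S (fun f => tpow n U (glue S a h) f * ψ f)]
  simp only [tpow_glue]
  rw [Matrix.mul_apply]
  rw [Finset.sum_comm]
  refine Finset.sum_congr rfl fun h' _ => ?_
  rw [Matrix.mul_apply, Finset.sum_mul]
  refine Finset.sum_congr rfl fun a' _ => ?_
  show tpI {i // i ∈ S} U a a' * tpI {i // i ∉ S} U h h' * ψ (glue S a' h') = _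
  simp only [amp, Matrix.of_apply, Matrix.transpose_apply]
  ring

lemma transpose_mul_transpose_conjTranspose {α β : Type*} [Fintype α] [Fintype β]
    [DecidableEq α] [DecidableEq β] (C : Matrix α β ℂ) :
    Cᵀ * (Cᵀ)ᴴ = (Cᴴ * C)ᵀ := by
  ext x y
  simp only [Matrix.mul_apply, Matrix.transpose_apply, Matrix.conjTranspose_apply]
  exact Finset.sum_congr rfl fun h _ => by ring

lemma rdm_mulVec (U : Matrix τ' τ ℂ) (hU : Uᴴ * U = 1) (ψ : (Fin n → τ) → ℂ) :
    rdm S ((tpow n U).mulVec ψ) =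
      tpI {i // i ∈ S} U * rdm S ψ * (tpI {i // i ∈ S} U)ᴴ := by
  rw [rdm_eq_amp, rdm_eq_amp, amp_mulVec]
  have hC : (tpI {i // i ∉ S} U)ᵀ * ((tpI {i // i ∉ S} U)ᵀ)ᴴ = 1 := by
    rw [transpose_mul_transpose_conjTranspose, tpI_conjTranspose, tpI_mul, hU, tpI_one,
      Matrix.transpose_one]
  simp only [Matrix.conjTranspose_mul]
  calc tpI {i // i ∈ S} U * amp S ψ * (tpI {i // i ∉ S} U)ᵀ *
        (((tpI {i // i ∉ S} U)ᵀ)ᴴ * ((amp S ψ)ᴴ * (tpI {i // i ∈ S} U)ᴴ))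
      = tpI {i // i ∈ S} U * amp S ψ *
        ((tpI {i // i ∉ S} U)ᵀ * ((tpI {i // i ∉ S} U)ᵀ)ᴴ) *
        ((amp S ψ)ᴴ * (tpI {i // i ∈ S} U)ᴴ) := by
        simp only [Matrix.mul_assoc]
    _ = _ := by rw [hC, Matrix.mul_one]; simp only [Matrix.mul_assoc]

lemma rdm_mulVec_smul_one (U : Matrix τ' τ ℂ) (hU : Uᴴ * U = 1) (hU2 : U * Uᴴ = 1)
    (ψ : (Fin n → τ) → ℂ) (c : ℂ) (hψ : rdm S ψ = c • 1) :
    rdm S ((tpow n U).mulVec ψ) = c • 1 := by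
  rw [rdm_mulVec S U hU, hψ]
  rw [Matrix.mul_smul, Matrix.smul_mul, Matrix.mul_one, tpI_conjTranspose, tpI_mul, hU2, tpI_one]
end amp

section regroupSec
variable {n m : ℕ} (q : Fin m → ℕ) (S : Finset (Fin n))

lemma glue_comp (a : {i // i ∈ S} → ∀ j, Fin (q j)) (f : {i // i ∉ S} → ∀ j, Fin (q j))
    (j : Fin m) (k : Fin n) :
    glue S a f k j = glue S (fun s => a s j) (fun s => f s j) k := by
  unfold glue
  by_cases h : k ∈ S
  · rw [dif_pos h, dif_pos h]
  · rw [dif_neg h, dif_neg h]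

lemma rdm_regroup (φ : ∀ j, (Fin n → Fin (q j)) → ℂ)
    (a b : {i // i ∈ S} → ∀ j, Fin (q j)) :
    rdm S (regroup q φ) a b =
      ∏ j, rdm S (φ j) (fun s => a s j) (fun s => b s j) := by
  show (∑ f : {i // i ∉ S} → ∀ j, Fin (q j),
      regroup q φ (glue S a f) * (starRingEnd ℂ) (regroup q φ (glue S b f))) = _
  have key : ∀ (c : {i // i ∈ S} → ∀ j, Fin (q j)) (f : {i // i ∉ S} → ∀ j, Fin (q j)),
      regroup q φ (glue S c f) =
        ∏ j, φ j (glue S (fun s => c s j) (fun s => f s j)) := by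
    intro c f
    unfold regroup
    exact Finset.prod_congr rfl fun j _ => by
      congr 1; funext k; exact glue_comp q S c f j k
  let e : (∀ j, {i // i ∉ S} → Fin (q j)) ≃ ({i // i ∉ S} → ∀ j, Fin (q j)) :=
    Equiv.piComm fun (j : Fin m) (s : {i // i ∉ S}) => Fin (q j)
  rw [← Equiv.sum_comp e (fun f => regroup q φ (glue S a f) *
      (starRingEnd ℂ) (regroup q φ (glue S b f)))]
  have he : ∀ (F : ∀ j, {i // i ∉ S} → Fin (q j)) (s : {i // i ∉ S}) (j : Fin m),
      e F s j = F j s := fun _ _ _ => rfl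
  have this1 : ∀ F : ∀ j, {i // i ∉ S} → Fin (q j),
      regroup q φ (glue S a (e F)) * (starRingEnd ℂ) (regroup q φ (glue S b (e F))) =
      ∏ j, (φ j (glue S (fun s => a s j) (F j)) *
        (starRingEnd ℂ) (φ j (glue S (fun s => b s j) (F j)))) := by
    intro F
    rw [key, key, map_prod, ← Finset.prod_mul_distrib]
    exact Finset.prod_congr rfl fun j _ => by
      simp only [he]
  rw [Fintype.sum_congr _ _ this1]
  have h2 := Finset.prod_univ_sum
    (fun j : Fin m => (Finset.univ : Finset ({i // i ∉ S} → Fin (q j))))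
    (fun j x => φ j (glue S (fun s => a s j) x) *
      (starRingEnd ℂ) (φ j (glue S (fun s => b s j) x)))
  rw [Fintype.piFinset_univ] at h2
  exact h2.symm
end regroupSec

lemma trace_rdm {n : ℕ} {τ : Type*} [Fintype τ] (S : Finset (Fin n))
    (ψ : (Fin n → τ) → ℂ) (hψ : ∑ g, Complex.normSq (ψ g) = 1) :
    ∑ a, rdm S ψ a a = 1 := by
  have : ∑ a, rdm S ψ a a = ∑ g, ((Complex.normSq (ψ g) : ℝ) : ℂ) := by
    rw [sum_glue S (fun g => ((Complex.normSq (ψ g) : ℝ) : ℂ))]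
    refine Finset.sum_congr rfl fun a _ => ?_
    show (∑ f : _, ψ (glue S a f) * (starRingEnd ℂ) (ψ (glue S a f))) = _
    exact Finset.sum_congr rfl fun f _ => Complex.mul_conj _
  rw [this, ← Complex.ofReal_sum, hψ, Complex.ofReal_one]

section extract
variable {ι : Type*} [Fintype ι] [DecidableEq ι] {m : ℕ} {q : Fin m → ℕ}

lemma extract_factor (T : ∀ j, Matrix (ι → Fin (q j)) (ι → Fin (q j)) ℂ) (c : ℂ)
    (hyp : ∀ α β : ∀ j, ι → Fin (q j),
      (∏ j, T j (α j) (β j)) = c * (if α = β then 1 else 0))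
    (htr : ∀ j, ∑ x, T j x x = 1) (j0 : Fin m) (α β : ι → Fin (q j0)) :
    (Fintype.card (ι → Fin (q j0)) : ℂ) * T j0 α β =
      c * (Fintype.card (∀ j, ι → Fin (q j)) : ℂ) * (if α = β then 1 else 0) := by
  have main := Finset.sum_congr rfl
    (fun (γ : ∀ j, ι → Fin (q j)) (_ : γ ∈ Finset.univ) =>
      hyp (Function.update γ j0 α) (Function.update γ j0 β))
  have lhs : ∀ γ : ∀ j, ι → Fin (q j),
      (∏ j, T j (Function.update γ j0 α j) (Function.update γ j0 β j)) =
        T j0 α β * ∏ j, (fun (j : Fin m) (x : ι → Fin (q j)) =>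
          if j = j0 then (1 : ℂ) else T j x x) j (γ j) := by
    intro γ
    rw [← Finset.mul_prod_erase Finset.univ _ (Finset.mem_univ j0),
        ← Finset.mul_prod_erase Finset.univ
          (fun j => (fun (j : Fin m) (x : ι → Fin (q j)) =>
            if j = j0 then (1 : ℂ) else T j x x) j (γ j)) (Finset.mem_univ j0)]
    simp only [Function.update_self, eq_self_iff_true, if_true, one_mul]
    congr 1
    refine Finset.prod_congr rfl fun j hj => ?_
    have hne : j ≠ j0 := (Finset.mem_erase.mp hj).1
    simp only [Function.update_of_ne hne, if_neg hne]
  have upd_iff : ∀ γ : ∀ j, ι → Fin (q j),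
      (Function.update γ j0 α = Function.update γ j0 β) ↔ α = β := by
    intro γ
    constructor
    · intro h
      have := congrFun h j0
      simpa [Function.update_self] using this
    · intro h; rw [h]
  calc (Fintype.card (ι → Fin (q j0)) : ℂ) * T j0 α β
      = T j0 α β * ∏ j, ∑ x : ι → Fin (q j),
          (fun (j : Fin m) (x : ι → Fin (q j)) =>
            if j = j0 then (1 : ℂ) else T j x x) j x := by
        rw [← Finset.mul_prod_erase Finset.univ _ (Finset.mem_univ j0)]
        simp only [eq_self_iff_true, if_true]
        rw [Finset.sum_const, nsmul_eq_mul, mul_one, Finset.card_univ]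
        have h1 : ∏ j ∈ Finset.univ.erase j0, (∑ x : ι → Fin (q j),
            if j = j0 then (1 : ℂ) else T j x x) = 1 := by
          refine Finset.prod_eq_one fun j hj => ?_
          have hne : j ≠ j0 := (Finset.mem_erase.mp hj).1
          simp only [if_neg hne]
          exact htr j
        rw [h1, mul_one]
        ring
    _ = ∑ γ : ∀ j, ι → Fin (q j), T j0 α β * ∏ j,
          (fun (j : Fin m) (x : ι → Fin (q j)) =>
            if j = j0 then (1 : ℂ) else T j x x) j (γ j) := by
        rw [← Finset.mul_sum]
        congr 1
        rw [Finset.prod_univ_sum, Fintype.piFinset_univ]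
    _ = ∑ γ : ∀ j, ι → Fin (q j),
          (∏ j, T j (Function.update γ j0 α j) (Function.update γ j0 β j)) := by
        exact Finset.sum_congr rfl fun γ _ => (lhs γ).symm
    _ = ∑ γ : ∀ j, ι → Fin (q j),
          c * (if Function.update γ j0 α = Function.update γ j0 β then 1 else 0) := main
    _ = ∑ γ : ∀ j, ι → Fin (q j), c * (if α = β then 1 else 0) := by
        exact Finset.sum_congr rfl fun γ _ => by rw [if_congr (upd_iff γ) rfl rfl]
    _ = c * (Fintype.card (∀ j, ι → Fin (q j)) : ℂ) * (if α = β then 1 else 0) := by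
        rw [Finset.sum_const, nsmul_eq_mul, Finset.card_univ]
        ring
end extract


-- factorization facts
lemma fact_setup {D : ℕ} (hD : D % 4 = 2) :
    ∃ (m : ℕ) (p e : Fin m → ℕ) (j0 : Fin m),
      (∀ i, (p i).Prime) ∧ Function.Injective p ∧ (∀ i, 1 ≤ e i) ∧
      D = ∏ i, p i ^ e i ∧ p j0 ^ e j0 = 2 := by
  have hD0 : D ≠ 0 := by intro h; rw [h] at hD; simp at hD
  have hdvd : 2 ∣ D := by
    have : D % 2 = 0 := by
      rw [← Nat.mod_mod_of_dvd D (by norm_num : (2:ℕ) ∣ 4), hD]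
    exact Nat.dvd_of_mod_eq_zero this
  have h2mem : 2 ∈ D.primeFactors := Nat.mem_primeFactors.mpr ⟨Nat.prime_two, hdvd, hD0⟩
  set m := D.primeFactors.card with hm
  set E := D.primeFactors.equivFin with hE
  refine ⟨m, fun i => ((E.symm i : ℕ)), fun i => D.factorization ((E.symm i : ℕ)),
    E ⟨2, h2mem⟩, fun i => Nat.prime_of_mem_primeFactors (E.symm i).2,
    ?_, ?_, ?_, ?_⟩
  · intro i j h
    exact E.symm.injective (Subtype.ext h)
  · intro i
    exact (Nat.Prime.factorization_pos_of_dvd (Nat.prime_of_mem_primeFactors (E.symm i).2)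
      hD0 (Nat.dvd_of_mem_primeFactors (E.symm i).2))
  · have h1 : ∏ i : Fin m, ((E.symm i : ℕ)) ^ D.factorization ((E.symm i : ℕ))
        = ∏ x : D.primeFactors, ((x : ℕ)) ^ D.factorization ((x : ℕ)) := by
      exact Equiv.prod_comp E.symm (fun x : D.primeFactors =>
        ((x : ℕ)) ^ D.factorization ((x : ℕ)))
    rw [h1, ← Finset.prod_subtype D.primeFactors (fun x => Iff.rfl)
      (fun q => q ^ D.factorization q), ← Nat.support_factorization]
    exact (Nat.factorization_prod_pow_eq_self hD0).symm
  · -- p j0 ^ e j0 = 2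
    simp only [Equiv.symm_apply_apply]
    -- D.factorization 2 = 1
    have hM : D = 2 * (D / 2) := (Nat.mul_div_cancel' hdvd).symm
    have hM0 : D / 2 ≠ 0 := by
      intro h; rw [h, Nat.mul_zero] at hM; exact hD0 hM
    have hModd : ¬ (2 ∣ D / 2) := by
      intro ⟨k, hk⟩
      rw [hk, ← Nat.mul_assoc] at hM
      rw [hM] at hD
      simp [Nat.mul_mod_right] at hD
    have : D.factorization 2 = 1 := by
      conv_lhs => rw [hM]
      rw [Nat.factorization_mul (by norm_num) hM0]
      simp [Nat.Prime.factorization Nat.prime_two,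
        Nat.factorization_eq_zero_of_not_dvd hModd]
    rw [this, pow_one]

/-- assuming (a) the factorization theorem for stabilizer states in composite
dimension and (b) the nonexistence of `AME(4,2)` states, there is no stabilizer `AME(4, D)`
state for any `D ≡ 2 (mod 4)`; in particular none for `D = 6`. -/
theorem no_stabilizer_AME_4_D_mod_4
    (hFact : ∀ (n D m : ℕ) (p e : Fin m → ℕ),
      (∀ i, (p i).Prime) → Function.Injective p → (∀ i, 1 ≤ e i) →
      D = ∏ i, p i ^ e i →
      ∀ Φ : (Fin n → Fin D) → ℂ, IsStabState Φ →
        ∃ U : Matrix (∀ i, Fin (p i ^ e i)) (Fin D) ℂ,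
          Uᴴ * U = 1 ∧ U * Uᴴ = 1 ∧
          ∃ φ : ∀ i, (Fin n → Fin (p i ^ e i)) → ℂ,
            (∀ i, IsStabState (φ i)) ∧
            (tpow n U).mulVec Φ = regroup (fun i => p i ^ e i) φ)
    (hNoAME42 : ¬ ∃ ψ : (Fin 4 → Fin 2) → ℂ, IsAME ψ) :
    (∀ D : ℕ, D % 4 = 2 →
      ¬ ∃ ψ : (Fin 4 → Fin D) → ℂ, IsStabState ψ ∧ IsAME ψ) ∧
    ¬ ∃ ψ : (Fin 4 → Fin 6) → ℂ, IsStabState ψ ∧ IsAME ψ := by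
  have key : ∀ D : ℕ, D % 4 = 2 →
      ¬ ∃ ψ : (Fin 4 → Fin D) → ℂ, IsStabState ψ ∧ IsAME ψ := by
    intro D hD
    rintro ⟨ψ, hstab, hAME⟩
    obtain ⟨m, p, e, j0, hp, hinj, he, hprod, hq⟩ := fact_setup hD
    obtain ⟨U, hU1, hU2, φ, hφstab, heq⟩ := hFact 4 D m p e hp hinj he hprod ψ hstab
    have hDnat : D ≠ 0 := by intro h; rw [h] at hD; simp at hD
    have hD0 : (D : ℂ) ≠ 0 := Nat.cast_ne_zero.mpr hDnat
    have hAMEj0 : IsAME (φ j0) := by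
      refine ⟨(hφstab j0).1, fun S hS => ?_⟩
      set c : ℂ := ((Fintype.card (Fin D) : ℂ) ^ S.card)⁻¹ with hc
      have h1 : rdm S ((tpow 4 U).mulVec ψ) = c • 1 :=
        rdm_mulVec_smul_one S U hU1 hU2 ψ c (hAME.2 S hS)
      rw [heq] at h1
      have hyp : ∀ α β : ∀ j, {i // i ∈ S} → Fin (p j ^ e j),
          (∏ j, rdm S (φ j) (α j) (β j)) = c * (if α = β then 1 else 0) := by
        intro α β
        have h2 := rdm_regroup (fun j => p j ^ e j) S φ
          (fun s j => α j s) (fun s j => β j s)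
        rw [h1] at h2
        have h3 : ((fun s j => α j s) : {i // i ∈ S} → ∀ j, Fin (p j ^ e j)) =
            (fun s j => β j s) ↔ α = β := by
          constructor
          · intro h; funext j s; exact congrFun (congrFun h s) j
          · intro h; rw [h]
        have h4 : ((c • (1 : Matrix ({i // i ∈ S} → ∀ j, Fin (p j ^ e j))
              ({i // i ∈ S} → ∀ j, Fin (p j ^ e j)) ℂ))
              (fun s j => α j s) (fun s j => β j s)) = c * (if α = β then 1 else 0) := by
          rw [Matrix.smul_apply, Matrix.one_apply, if_congr h3 rfl rfl, smul_eq_mul]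
        exact h2.symm.trans h4
      have htr : ∀ j, ∑ x, rdm S (φ j) x x = 1 :=
        fun j => trace_rdm S (φ j) (hφstab j).1
      have hNtot : Fintype.card (∀ j, {i // i ∈ S} → Fin (p j ^ e j)) = D ^ S.card := by
        rw [Fintype.card_pi]
        simp only [Fintype.card_fun, Fintype.card_fin, Fintype.card_coe]
        rw [Finset.prod_pow, ← hprod]
      have hN0 : Fintype.card ({i // i ∈ S} → Fin (p j0 ^ e j0)) = 2 ^ S.card := by
        rw [Fintype.card_fun, Fintype.card_fin, Fintype.card_coe, hq]
      have h2ne : ((2 : ℂ) ^ S.card) ≠ 0 := pow_ne_zero _ two_ne_zero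
      ext α β
      have h5 := extract_factor (fun j => rdm S (φ j)) c hyp htr j0 α β
      rw [hNtot, hN0] at h5
      push_cast at h5
      have hcD : c * ((D : ℂ) ^ S.card) = 1 := by
        rw [hc, Fintype.card_fin]
        exact inv_mul_cancel₀ (pow_ne_zero _ hD0)
      rw [hcD, one_mul] at h5
      rw [Matrix.smul_apply, Matrix.one_apply, smul_eq_mul, Fintype.card_fin]
      have hq2 : ((p j0 ^ e j0 : ℕ) : ℂ) = 2 := by rw [hq]; norm_num
      rw [hq2, eq_inv_mul_iff_mul_eq₀ h2ne]
      exact h5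
    exact hNoAME42 (by rw [← hq]; exact ⟨φ j0, hAMEj0⟩)
  exact ⟨key, key 6 (by norm_num)⟩
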